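/- arXiv:1307.4281 — 5 statements merged into one kernel-verified Lean document; each statement's English description precedes it below -/
import Mathlib

section
/- If A is an n×n Hermitian matrix over the real quaternions ℍ, then all of its row determinants and all of its column determinants coincide, i.e. rdet_1 A = ⋯ = rdet_n A = cdet_1 A = ⋯ = cdet_n A, and this common value is a real number. -/
open Quaternion Matrix Finset

noncomputable section

/-- Ordered product of the entries of `A` along the cycle of `σ` containing `x`,
starting at `x`:  `a_{x,σx} · a_{σx,σ²x} ⋯ a_{σ^{c-1}x,x}`. -/
def cycProd {n : ℕ} (A : Matrix (Fin n) (Fin n) ℍ[ℝ]) (σ : Equiv.Perm (Fin n))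
    (x : Fin n) : ℍ[ℝ] :=
  ((List.range (Function.minimalPeriod (⇑σ) x)).map
    (fun t => A ((⇑σ)^[t] x) ((⇑σ)^[t + 1] x))).prod

/-- `x` is the smallest element of its `σ`-cycle. -/
def isLeaderB {n : ℕ} (σ : Equiv.Perm (Fin n)) (x : Fin n) : Bool :=
  (List.range n).all fun t => decide (x ≤ (⇑σ)^[t] x)

/-- `x` lies in the `σ`-cycle of `i`. -/
def inCycleB {n : ℕ} (σ : Equiv.Perm (Fin n)) (i x : Fin n) : Bool :=
  (List.range n).any fun t => decide ((⇑σ)^[t] i = x)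

/-- The increasing list of the smallest elements of the `σ`-cycles other than
the cycle of `i`. -/
def leaders {n : ℕ} (σ : Equiv.Perm (Fin n)) (i : Fin n) : List (Fin n) :=
  (List.finRange n).filter fun x => isLeaderB σ x && !(inCycleB σ i x)

/-- The `i`-th row determinant of a quaternion matrix: the sum over all
permutations, written in left-ordered cycle notation (the cycle of `i` first,
starting with `i`; every other cycle starting with its smallest element, these
smallest elements increasing from left to right), of the sign times the ordered
product of the corresponding entries. -/
def rdet {n : ℕ} (A : Matrix (Fin n) (Fin n) ℍ[ℝ]) (i : Fin n) : ℍ[ℝ] :=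
  ∑ σ : Equiv.Perm (Fin n),
    ((Equiv.Perm.sign σ : ℤ) : ℍ[ℝ]) *
      (cycProd A σ i * ((leaders σ i).map (cycProd A σ)).prod)

/-- The `j`-th column determinant of a quaternion matrix: the sum over all
permutations, written in right-ordered cycle notation (the cycle of `j` last,
ending with `j`; every other cycle ending with its smallest element, these
smallest elements increasing from right to left), of the sign times the ordered
product of the corresponding entries. -/
def cdet {n : ℕ} (A : Matrix (Fin n) (Fin n) ℍ[ℝ]) (j : Fin n) : ℍ[ℝ] :=
  ∑ τ : Equiv.Perm (Fin n),
    ((Equiv.Perm.sign τ : ℤ) : ℍ[ℝ]) *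
      ((((leaders τ j).reverse).map (cycProd A τ)).prod * cycProd A τ j)

/-- The determinant of a (Hermitian) quaternion matrix: the common value of all
row and column determinants. -/
def Hdet : {m : ℕ} → Matrix (Fin m) (Fin m) ℍ[ℝ] → ℍ[ℝ]
  | 0, _ => 1
  | _ + 1, A => rdet A 0

/-- The principal submatrix of `M` with rows and columns indexed by `β`. -/
def principalSub {n : ℕ} (M : Matrix (Fin n) (Fin n) ℍ[ℝ]) (β : Finset (Fin n)) :
    Matrix (Fin β.card) (Fin β.card) ℍ[ℝ] :=
  M.submatrix (⇑(β.orderEmbOfFin rfl)) (⇑(β.orderEmbOfFin rfl))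

/-- The position of `i` inside the increasing enumeration of the finset `β`. -/
def posIn {n : ℕ} (β : Finset (Fin n)) {i : Fin n} (h : i ∈ β) : Fin β.card :=
  (β.orderIsoOfFin rfl).symm ⟨i, h⟩

/-- `Σ_{β ∈ J_{s,n}{i}} cdet_i (M_β^β)`: the sum, over all subsets `β` of
cardinality `s` containing `i`, of the column determinants of the principal
submatrix `M_β^β` taken at the position of `i` within `β`. -/
def cdetPM {n : ℕ} (M : Matrix (Fin n) (Fin n) ℍ[ℝ]) (s : ℕ) (i : Fin n) : ℍ[ℝ] :=
  ∑ β ∈ ((Finset.powersetCard s (Finset.univ : Finset (Fin n))).filter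
      fun β => i ∈ β).attach,
    cdet (principalSub M β.1) (posIn β.1 (Finset.mem_filter.mp β.2).2)

/-- `Σ_{α ∈ I_{s,n}{j}} rdet_j (M_α^α)`: the sum, over all subsets `α` of
cardinality `s` containing `j`, of the row determinants of the principal
submatrix `M_α^α` taken at the position of `j` within `α`. -/
def rdetPM {n : ℕ} (M : Matrix (Fin n) (Fin n) ℍ[ℝ]) (s : ℕ) (j : Fin n) : ℍ[ℝ] :=
  ∑ α ∈ ((Finset.powersetCard s (Finset.univ : Finset (Fin n))).filter
      fun α => j ∈ α).attach,
    rdet (principalSub M α.1) (posIn α.1 (Finset.mem_filter.mp α.2).2)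

/-- The sum of all principal minors of `M` of order `r`. -/
def minorSum {n : ℕ} (M : Matrix (Fin n) (Fin n) ℍ[ℝ]) (r : ℕ) : ℍ[ℝ] :=
  ∑ β ∈ Finset.powersetCard r (Finset.univ : Finset (Fin n)),
    Hdet (principalSub M β)

/-- The (column) rank of a quaternion matrix: the dimension of the span of its
columns as a right `ℍ`-vector space. -/
def qrank {m n : ℕ} (A : Matrix (Fin m) (Fin n) ℍ[ℝ]) : ℕ :=
  Module.finrank ℍ[ℝ]ᵐᵒᵖ
    (Submodule.span ℍ[ℝ]ᵐᵒᵖ (Set.range Aᵀ) : Submodule ℍ[ℝ]ᵐᵒᵖ (Fin m → ℍ[ℝ]))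

/-- `Ind A = k`: `k` is the smallest nonnegative integer with
`rank A^(k+1) = rank A^k`. -/
def isInd {n : ℕ} (A : Matrix (Fin n) (Fin n) ℍ[ℝ]) (k : ℕ) : Prop :=
  qrank (A ^ (k + 1)) = qrank (A ^ k) ∧
    ∀ l < k, qrank (A ^ (l + 1)) ≠ qrank (A ^ l)

/-- `X` is a Drazin inverse of `A` (relative to the index `k`). -/
def isDrazin {n : ℕ} (A X : Matrix (Fin n) (Fin n) ℍ[ℝ]) (k : ℕ) : Prop :=
  A ^ (k + 1) * X = A ^ k ∧ X * A * X = X ∧ A * X = X * A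

end

/-!
Write a permutation as `σ = c * τ`, where `c` is its cycle through a point `i`, acting on the
orbit `B` of `i`, and `τ` permutes the remaining points. For Hermitian `A`, inverting a cycle conjugates its
product of entries, so the signed sum `cycleSum A B i` of the products over all cycles on `B` is
self-adjoint, i.e. real; since the real part of a cycle product does not depend on where the
cycle is started, it does not depend on `i ∈ B` either. Being real, it is central in `ℍ` and can
be pulled out of the ordered products, so `rdet_i A` and the determinant `minorDet A S` that
orders all cycles by their least elements both expand as `∑_{B ∋ i} cycleSum A B i * minorDet A
(S \ B)`. By strong induction on `S`, `minorDet A S` is real; hence every `rdet_i A` equals the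
real number `minorDet A univ`, and `cdet_j A = star (rdet_j A)` by the same inversion `σ ↦ σ⁻¹`.
-/

open Equiv Function

section StarMul

variable {R : Type*} [Monoid R] [StarMul R]

lemma star_list_prod (l : List R) : star l.prod = (l.reverse.map star).prod := by
  induction l with
  | nil => simp
  | cons a l ih => simp [ih]

lemma star_prod_map_range (m : ℕ) (f : ℕ → R) :
    star ((List.range m).map f).prod = ((List.range m).map fun s => star (f (m - 1 - s))).prod := by
  rw [star_list_prod, ← List.map_reverse, List.range_eq_range', List.reverse_range',
    List.map_map, List.map_map, ← List.range_eq_range']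
  simp [Function.comp_def]

end StarMul

lemma List.filter_append_cons_eq_of_forall_ne {α : Type*} {l₁ l₂ : List α} {b : α}
    {p q : α → Bool} (h₁ : b ∉ l₁) (h₂ : b ∉ l₂) (hpq : ∀ x ≠ b, p x = q x) (hb : p b = true) :
    (l₁ ++ b :: l₂).filter p = l₁.filter q ++ b :: l₂.filter q := by
  rw [List.filter_append, List.filter_cons_of_pos hb,
    List.filter_congr fun x hx => hpq x (ne_of_mem_of_not_mem hx h₁),
    List.filter_congr fun x hx => hpq x (ne_of_mem_of_not_mem hx h₂)]

namespace Quaternion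

variable {R : Type*} [CommRing R]

lemma re_mul_comm (a b : ℍ[R]) : (a * b).re = (b * a).re := by
  simp only [re_mul]
  ring

lemma re_sum {ι : Type*} (s : Finset ι) (f : ι → ℍ[R]) :
    (∑ i ∈ s, f i).re = ∑ i ∈ s, (f i).re :=
  map_sum (QuaternionAlgebra.reₗ _ _ _) f s

lemma _root_.IsSelfAdjoint.commute_quaternion [NoZeroDivisors R] [CharZero R] {a : ℍ[R]}
    (ha : IsSelfAdjoint a) (b : ℍ[R]) : Commute a b := by
  rw [star_eq_self.mp ha.star_eq]
  exact coe_commute _ b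

end Quaternion

section Iterate

variable {α : Type*} {f g : α → α} {x : α}

lemma iterate_eq_of_eqOn {T : Set α} (hT : Set.MapsTo f T T) (h : Set.EqOn f g T) (hx : x ∈ T)
    (t : ℕ) : f^[t] x = g^[t] x := by
  induction t with
  | zero => rfl
  | succ t ih => rw [iterate_succ_apply', iterate_succ_apply', ← ih, h (hT.iterate t hx)]

lemma minimalPeriod_congr (h : ∀ t, f^[t] x = g^[t] x) : minimalPeriod f x = minimalPeriod g x :=
  minimalPeriod_eq_minimalPeriod_iff.mpr fun k => by simp only [IsPeriodicPt, IsFixedPt, h]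

lemma Equiv.Perm.mapsTo_compl_of_fixes {σ : Perm α} {U : Set α} (h : ∀ y ∈ U, σ y = y) :
    Set.MapsTo σ Uᶜ Uᶜ :=
  fun _ hy hσy => hy (σ.injective (h _ hσy) ▸ hσy)

end Iterate

namespace QuaternionDet

section Orbit

variable {α : Type*} [Fintype α] {σ σ' : Perm α} {x y : α}

lemma sameCycle_iff_exists_iterate : σ.SameCycle x y ↔ ∃ t : ℕ, σ^[t] x = y := by
  simp only [Perm.iterate_eq_pow]
  exact ⟨Perm.SameCycle.exists_nat_pow_eq, fun ⟨t, ht⟩ => ⟨t, by rwa [zpow_natCast]⟩⟩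

lemma minimalPeriod_perm_pos (σ : Perm α) (x : α) : 0 < minimalPeriod σ x :=
  MulAction.period_pos_of_orderOf_pos (orderOf_pos σ) x

lemma sameCycle_iff_exists_iterate_lt_card :
    σ.SameCycle x y ↔ ∃ t < Fintype.card α, σ^[t] x = y := by
  rw [sameCycle_iff_exists_iterate]
  refine ⟨fun ⟨t, ht⟩ => ⟨t % minimalPeriod σ x, ?_, by rwa [iterate_mod_minimalPeriod_eq]⟩,
    fun ⟨t, _, ht⟩ => ⟨t, ht⟩⟩
  exact (Nat.mod_lt _ (minimalPeriod_perm_pos σ x)).trans_le minimalPeriod_le_card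

lemma sameCycle_congr (h : ∀ t, σ^[t] x = σ'^[t] x) : σ.SameCycle x y ↔ σ'.SameCycle x y := by
  simp only [sameCycle_iff_exists_iterate, h]

variable [DecidableEq α]

def orbitFinset (σ : Perm α) (x : α) : Finset α := univ.filter (σ.SameCycle x)

@[simp]
lemma mem_orbitFinset : y ∈ orbitFinset σ x ↔ σ.SameCycle x y := by
  simp [orbitFinset]

lemma orbitFinset_inv : orbitFinset σ⁻¹ x = orbitFinset σ x := by
  ext
  simp [Perm.sameCycle_inv]

lemma orbitFinset_eq_of_sameCycle (h : σ.SameCycle x y) : orbitFinset σ y = orbitFinset σ x := by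
  ext z
  simp only [mem_orbitFinset]
  exact ⟨h.trans, h.symm.trans⟩

lemma orbitFinset_congr (h : ∀ t, σ^[t] x = σ'^[t] x) : orbitFinset σ x = orbitFinset σ' x := by
  ext
  simp only [mem_orbitFinset, sameCycle_congr h]

end Orbit

section PermsOn

variable {α : Type*} [Fintype α] [DecidableEq α] {S B : Finset α} {σ c τ : Perm α} {x i : α}

def permsOn (S : Finset α) : Finset (Perm α) := univ.filter fun τ => ∀ y ∉ S, τ y = y

def cyclesOn (B : Finset α) : Finset (Perm α) :=
  (permsOn B).filter fun c => ∀ x ∈ B, orbitFinset c x = B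

lemma mem_permsOn : τ ∈ permsOn S ↔ ∀ y ∉ S, τ y = y := by
  simp [permsOn]

lemma mem_cyclesOn : c ∈ cyclesOn B ↔ c ∈ permsOn B ∧ ∀ x ∈ B, orbitFinset c x = B :=
  mem_filter

lemma permsOn_univ : permsOn (univ : Finset α) = univ := by
  ext
  simp [mem_permsOn]

lemma permsOn_empty : permsOn (∅ : Finset α) = {1} := by
  ext τ
  simp only [mem_permsOn, notMem_empty, not_false_eq_true, forall_const, mem_singleton]
  exact ⟨fun h => Equiv.ext h, fun h y => by rw [h]; rfl⟩

lemma inv_mem_cyclesOn (hc : c ∈ cyclesOn B) : c⁻¹ ∈ cyclesOn B := by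
  rw [mem_cyclesOn, mem_permsOn] at hc ⊢
  exact ⟨fun y hy => by rw [Perm.inv_eq_iff_eq, hc.1 y hy], fun x hx => by
    rw [orbitFinset_inv, hc.2 x hx]⟩

lemma mapsTo_of_mem_permsOn (hσ : σ ∈ permsOn S) : Set.MapsTo σ S S := by
  simpa using Perm.mapsTo_compl_of_fixes (U := (↑S)ᶜ) fun y hy => mem_permsOn.mp hσ y hy

lemma apply_eq_self_of_mem_permsOn_sdiff (hτ : τ ∈ permsOn (S \ B)) : ∀ y ∈ B, τ y = y :=
  fun y hy => mem_permsOn.mp hτ y fun h => (mem_sdiff.mp h).2 hy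

lemma orbitFinset_subset (hσ : σ ∈ permsOn S) (hi : i ∈ S) : orbitFinset σ i ⊆ S := by
  intro y hy
  obtain ⟨t, rfl⟩ := sameCycle_iff_exists_iterate.mp (mem_orbitFinset.mp hy)
  exact (mapsTo_of_mem_permsOn hσ).iterate t hi

lemma iterate_mul_of_mem (hc : c ∈ permsOn B) (hτ : ∀ y ∈ B, τ y = y) (hx : x ∈ B) (t : ℕ) :
    (c * τ)^[t] x = c^[t] x :=
  (iterate_eq_of_eqOn (mapsTo_of_mem_permsOn hc)
    (fun y hy => (congrArg c (hτ y hy)).symm) hx t).symm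

lemma iterate_mul_of_notMem (hc : c ∈ permsOn B) (hτ : ∀ y ∈ B, τ y = y) (hx : x ∉ B)
    (t : ℕ) : (c * τ)^[t] x = τ^[t] x :=
  (iterate_eq_of_eqOn (Perm.mapsTo_compl_of_fixes (U := ↑B) hτ)
    (fun _ hy => (mem_permsOn.mp hc _ (Perm.mapsTo_compl_of_fixes (σ := τ) (U := ↑B) hτ hy)).symm)
    hx t).symm

lemma cycleOf_mem_cyclesOn (σ : Perm α) (i : α) : σ.cycleOf i ∈ cyclesOn (orbitFinset σ i) := by
  have hiter : ∀ t, (σ.cycleOf i)^[t] i = σ^[t] i := fun t => by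
    simp only [Perm.iterate_eq_pow, Perm.cycleOf_pow_apply_self]
  refine mem_cyclesOn.mpr ⟨mem_permsOn.mpr fun y hy => ?_, fun x hx => ?_⟩
  · exact Perm.cycleOf_apply_of_not_sameCycle (by simpa using hy)
  · rw [← orbitFinset_congr hiter]
    refine orbitFinset_eq_of_sameCycle ?_
    rwa [sameCycle_congr hiter, ← mem_orbitFinset]

lemma inv_cycleOf_mul_mem_permsOn (hσ : σ ∈ permsOn S) (i : α) :
    (σ.cycleOf i)⁻¹ * σ ∈ permsOn (S \ orbitFinset σ i) := by
  refine mem_permsOn.mpr fun y hy => ?_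
  rw [Perm.mul_apply, Perm.inv_eq_iff_eq, Perm.cycleOf_apply]
  split_ifs with h
  · rfl
  · refine mem_permsOn.mp hσ y fun hyS => hy (mem_sdiff.mpr ⟨hyS, ?_⟩)
    simpa using h

lemma mul_mem_permsOn (hBS : B ⊆ S) (hc : c ∈ permsOn B) (hτ : τ ∈ permsOn (S \ B)) :
    c * τ ∈ permsOn S := by
  refine mem_permsOn.mpr fun y hy => ?_
  rw [Perm.mul_apply, mem_permsOn.mp hτ y fun h => hy (mem_sdiff.mp h).1,
    mem_permsOn.mp hc y fun h => hy (hBS h)]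

lemma orbitFinset_mul (hc : c ∈ cyclesOn B) (hτ : ∀ y ∈ B, τ y = y) (hx : x ∈ B) :
    orbitFinset (c * τ) x = B := by
  rw [orbitFinset_congr (iterate_mul_of_mem (mem_cyclesOn.mp hc).1 hτ hx)]
  exact (mem_cyclesOn.mp hc).2 x hx

lemma cycleOf_mul (hc : c ∈ cyclesOn B) (hτ : ∀ y ∈ B, τ y = y) (hi : i ∈ B) :
    (c * τ).cycleOf i = c := by
  ext y
  simp only [Perm.cycleOf_apply, ← mem_orbitFinset, orbitFinset_mul hc hτ hi]
  split_ifs with h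
  · rw [Perm.mul_apply, hτ y h]
  · exact (mem_permsOn.mp (mem_cyclesOn.mp hc).1 y h).symm

lemma sum_permsOn_eq_sum_cyclesOn {M : Type*} [AddCommMonoid M] (hi : i ∈ S)
    (g : Perm α → M) :
    ∑ σ ∈ permsOn S, g σ = ∑ B ∈ S.powerset.filter (i ∈ ·),
      ∑ τ ∈ permsOn (S \ B), ∑ c ∈ cyclesOn B, g (c * τ) := by
  rw [sum_congr rfl fun B _ => (sum_product_right (cyclesOn B) (permsOn (S \ B))
    fun p => g (p.1 * p.2)).symm, ← sum_sigma _ (fun B => cyclesOn B ×ˢ permsOn (S \ B))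
    fun p => g (p.2.1 * p.2.2)]
  refine sum_nbij' (fun σ => ⟨orbitFinset σ i, σ.cycleOf i, (σ.cycleOf i)⁻¹ * σ⟩)
    (fun p => p.2.1 * p.2.2) ?_ ?_ ?_ ?_ ?_
  · intro σ hσ
    simp only [mem_sigma, mem_filter, mem_powerset, mem_product]
    exact ⟨⟨orbitFinset_subset hσ hi, mem_orbitFinset.mpr .rfl⟩, cycleOf_mem_cyclesOn σ i,
      inv_cycleOf_mul_mem_permsOn hσ i⟩
  · rintro ⟨B, c, τ⟩ hp
    simp only [mem_sigma, mem_filter, mem_powerset, mem_product] at hp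
    exact mul_mem_permsOn hp.1.1 (mem_cyclesOn.mp hp.2.1).1 hp.2.2
  · exact fun σ _ => mul_inv_cancel_left _ σ
  · rintro ⟨B, c, τ⟩ hp
    simp only [mem_sigma, mem_filter, mem_powerset, mem_product] at hp
    obtain ⟨⟨_, hiB⟩, hc, hτ⟩ := hp
    have hτB := apply_eq_self_of_mem_permsOn_sdiff hτ
    simp only [orbitFinset_mul hc hτB hiB, cycleOf_mul hc hτB hiB, inv_mul_cancel_left]
  · exact fun σ _ => congrArg g (mul_inv_cancel_left _ σ).symm

end PermsOn

section Sign

variable {α : Type*} [Fintype α] [DecidableEq α]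

def qsign (σ : Perm α) : ℍ[ℝ] := ((Perm.sign σ : ℤ) : ℍ[ℝ])

lemma qsign_one : qsign (1 : Perm α) = 1 := by
  simp [qsign]

lemma qsign_mul (σ τ : Perm α) : qsign (σ * τ) = qsign σ * qsign τ := by
  simp [qsign]

lemma qsign_inv (σ : Perm α) : qsign σ⁻¹ = qsign σ := by
  simp [qsign]

lemma isSelfAdjoint_qsign (σ : Perm α) : IsSelfAdjoint (qsign σ) :=
  .intCast _

lemma commute_qsign (σ : Perm α) (q : ℍ[ℝ]) : Commute (qsign σ) q :=
  Int.cast_commute _ q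

lemma re_qsign_mul (σ : Perm α) (q : ℍ[ℝ]) :
    (qsign σ * q).re = ((Perm.sign σ : ℤ) : ℝ) * q.re := by
  simp [qsign, Quaternion.re_mul]

end Sign

variable {n : ℕ} {A : Matrix (Fin n) (Fin n) ℍ[ℝ]} {σ σ' : Perm (Fin n)} {x y : Fin n}

section CycProd

lemma cycProd_congr (A : Matrix (Fin n) (Fin n) ℍ[ℝ]) (h : ∀ t, σ^[t] x = σ'^[t] x) :
    cycProd A σ x = cycProd A σ' x := by
  simp only [cycProd, minimalPeriod_congr h, h]

lemma star_cycProd (hA : A.IsHermitian) (σ : Perm (Fin n)) (x : Fin n) :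
    star (cycProd A σ x) = cycProd A σ⁻¹ x := by
  set m := minimalPeriod σ x
  have hper : σ^[m] x = x := iterate_minimalPeriod
  have hinv : ∀ k ≤ m, (⇑σ⁻¹)^[k] x = σ^[m - k] x := fun k hk =>
    calc (⇑σ⁻¹)^[k] x = (⇑σ⁻¹)^[k] (σ^[k] (σ^[m - k] x)) := by
          rw [← iterate_add_apply, Nat.add_sub_cancel' hk, hper]
      _ = σ^[m - k] x := σ.left_inv.iterate k _
  have hm : minimalPeriod (⇑σ⁻¹) x = m := MulAction.period_inv σ x
  rw [cycProd, cycProd, star_prod_map_range, hm]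
  refine congrArg List.prod (List.map_congr_left fun s hs => ?_)
  have hs : s < m := List.mem_range.mp hs
  rw [hinv s hs.le, hinv (s + 1) hs, show m - 1 - s + 1 = m - s by omega,
    show m - 1 - s = m - (s + 1) by omega, hA.apply]

lemma re_cycProd_apply (A : Matrix (Fin n) (Fin n) ℍ[ℝ]) (σ : Perm (Fin n)) (x : Fin n) :
    (cycProd A σ (σ x)).re = (cycProd A σ x).re := by
  have hpos := minimalPeriod_perm_pos σ x
  obtain ⟨k, hk⟩ := Nat.exists_eq_succ_of_ne_zero hpos.ne'
  have hper : σ^[k] (σ x) = x := by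
    rw [← iterate_succ_apply, ← hk, iterate_minimalPeriod]
  have hper' : σ^[k] (σ (σ x)) = σ x := by
    rw [← iterate_succ_apply, iterate_succ_apply', hper]
  rw [cycProd, cycProd, minimalPeriod_apply (minimalPeriod_pos_iff_mem_periodicPts.mp hpos), hk]
  conv_lhs => rw [List.range_succ, List.map_append, List.prod_append]
  conv_rhs => rw [List.range_succ_eq_map, List.map_cons, List.prod_cons, List.map_map]
  rw [Quaternion.re_mul_comm]
  simp only [List.map_singleton, List.prod_singleton, comp_def, iterate_succ_apply, hper, hper',
    iterate_zero_apply]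

lemma re_cycProd_of_sameCycle (A : Matrix (Fin n) (Fin n) ℍ[ℝ]) (h : σ.SameCycle x y) :
    (cycProd A σ y).re = (cycProd A σ x).re := by
  obtain ⟨t, rfl⟩ := sameCycle_iff_exists_iterate.mp h
  clear h
  induction t with
  | zero => rfl
  | succ t ih => rw [iterate_succ_apply', re_cycProd_apply, ih]

end CycProd

section Leaders

variable {S B : Finset (Fin n)} {c τ : Perm (Fin n)} {i : Fin n}

lemma isLeaderB_iff : isLeaderB σ x = true ↔ ∀ y, σ.SameCycle x y → x ≤ y := by
  simp only [isLeaderB, List.all_eq_true, List.mem_range, decide_eq_true_eq,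
    sameCycle_iff_exists_iterate_lt_card, Fintype.card_fin]
  exact ⟨fun h y ⟨t, ht, hy⟩ => hy ▸ h t ht, fun h t ht => h _ ⟨t, ht, rfl⟩⟩

lemma inCycleB_iff : inCycleB σ i x = true ↔ σ.SameCycle i x := by
  simp [inCycleB, sameCycle_iff_exists_iterate_lt_card]

lemma isLeaderB_congr (h : ∀ t, σ^[t] x = σ'^[t] x) : isLeaderB σ x = isLeaderB σ' x := by
  simp only [isLeaderB, h]

lemma leaders_inv (σ : Perm (Fin n)) (i : Fin n) : leaders σ⁻¹ i = leaders σ i := by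
  refine List.filter_congr fun x _ => ?_
  have hlead : isLeaderB σ⁻¹ x = isLeaderB σ x :=
    Bool.eq_iff_iff.mpr (by simp only [isLeaderB_iff, Perm.sameCycle_inv])
  have hcyc : inCycleB σ⁻¹ i x = inCycleB σ i x :=
    Bool.eq_iff_iff.mpr (by simp only [inCycleB_iff, Perm.sameCycle_inv])
  rw [hlead, hcyc]

def isLeaderIn (S : Finset (Fin n)) (τ : Perm (Fin n)) (x : Fin n) : Bool :=
  isLeaderB τ x && decide (x ∈ S)

def leadersIn (S : Finset (Fin n)) (τ : Perm (Fin n)) : List (Fin n) :=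
  (List.finRange n).filter (isLeaderIn S τ)

lemma cycProd_mul_of_mem (A : Matrix (Fin n) (Fin n) ℍ[ℝ]) (hc : c ∈ permsOn B)
    (hτ : ∀ y ∈ B, τ y = y) (hx : x ∈ B) : cycProd A (c * τ) x = cycProd A c x :=
  cycProd_congr A (iterate_mul_of_mem hc hτ hx)

lemma map_cycProd_mul_filter_isLeaderIn (A : Matrix (Fin n) (Fin n) ℍ[ℝ]) (hc : c ∈ permsOn B)
    (hτ : ∀ y ∈ B, τ y = y) (l : List (Fin n)) :
    (l.filter (isLeaderIn (S \ B) τ)).map (cycProd A (c * τ)) =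
      (l.filter (isLeaderIn (S \ B) τ)).map (cycProd A τ) := by
  refine List.map_congr_left fun x hx => cycProd_congr A (iterate_mul_of_notMem hc hτ ?_)
  simp only [List.mem_filter, isLeaderIn, Bool.and_eq_true, decide_eq_true_eq, mem_sdiff] at hx
  exact hx.2.2.2

lemma isLeaderIn_mul_of_ne (hc : c ∈ cyclesOn B) (hτ : τ ∈ permsOn (S \ B)) (hB : B.Nonempty)
    (hx : x ≠ B.min' hB) : isLeaderIn S (c * τ) x = isLeaderIn (S \ B) τ x := by
  have hτB := apply_eq_self_of_mem_permsOn_sdiff hτ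
  by_cases hxB : x ∈ B
  · have hlead : isLeaderB (c * τ) x = false := by
      refine Bool.eq_false_iff.mpr fun h => hx (le_antisymm (isLeaderB_iff.mp h _ ?_)
        (B.min'_le x hxB))
      rw [← mem_orbitFinset, orbitFinset_mul hc hτB hxB]
      exact B.min'_mem hB
    simp [isLeaderIn, hlead, hxB]
  · rw [isLeaderIn, isLeaderIn,
      isLeaderB_congr (iterate_mul_of_notMem (mem_cyclesOn.mp hc).1 hτB hxB)]
    simp [hxB]

lemma leadersIn_mul (hBS : B ⊆ S) (hc : c ∈ cyclesOn B) (hτ : τ ∈ permsOn (S \ B))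
    (hB : B.Nonempty) {s t : List (Fin n)} (hst : List.finRange n = s ++ B.min' hB :: t) :
    leadersIn S (c * τ) =
      s.filter (isLeaderIn (S \ B) τ) ++ B.min' hB :: t.filter (isLeaderIn (S \ B) τ) := by
  have hnodup := List.nodup_finRange n
  rw [hst, List.nodup_middle, List.nodup_cons, List.mem_append, not_or] at hnodup
  rw [leadersIn, hst]
  refine List.filter_append_cons_eq_of_forall_ne hnodup.1.1 hnodup.1.2
    (fun x hx => isLeaderIn_mul_of_ne hc hτ hB hx) ?_
  have hτB := apply_eq_self_of_mem_permsOn_sdiff hτ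
  simp only [isLeaderIn, Bool.and_eq_true, decide_eq_true_eq, isLeaderB_iff]
  refine ⟨fun y hy => B.min'_le y ?_, hBS (B.min'_mem hB)⟩
  rwa [← mem_orbitFinset, orbitFinset_mul hc hτB (B.min'_mem hB)] at hy

lemma leadersIn_sdiff (hB : B.Nonempty) {s t : List (Fin n)}
    (hst : List.finRange n = s ++ B.min' hB :: t) :
    leadersIn (S \ B) τ = s.filter (isLeaderIn (S \ B) τ) ++ t.filter (isLeaderIn (S \ B) τ) := by
  rw [leadersIn, hst, List.filter_append, List.filter_cons_of_neg]
  simp [isLeaderIn, B.min'_mem hB]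

lemma leaders_mul (hc : c ∈ cyclesOn B) (hτ : ∀ y ∈ B, τ y = y) (hi : i ∈ B) :
    leaders (c * τ) i = leadersIn (univ \ B) τ := by
  refine List.filter_congr fun x _ => ?_
  by_cases hxB : x ∈ B
  · have hcyc : inCycleB (c * τ) i x = true := by
      rw [inCycleB_iff, ← mem_orbitFinset, orbitFinset_mul hc hτ hi]
      exact hxB
    simp [isLeaderIn, hcyc, hxB]
  · have hcyc : inCycleB (c * τ) i x = false := by
      rw [Bool.eq_false_iff, ne_eq, inCycleB_iff, ← mem_orbitFinset, orbitFinset_mul hc hτ hi]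
      exact hxB
    rw [hcyc, isLeaderIn, isLeaderB_congr (iterate_mul_of_notMem (mem_cyclesOn.mp hc).1 hτ hxB)]
    simp [hxB]

end Leaders

section Expansion

variable {S B : Finset (Fin n)} {i : Fin n}

noncomputable def cycleSum (A : Matrix (Fin n) (Fin n) ℍ[ℝ]) (B : Finset (Fin n)) (x : Fin n) :
    ℍ[ℝ] :=
  ∑ c ∈ cyclesOn B, qsign c * cycProd A c x

/-- The determinant of the principal submatrix on `S`, with each cycle read from its least
element and the cycles ordered by their least elements. -/
noncomputable def minorDet (A : Matrix (Fin n) (Fin n) ℍ[ℝ]) (S : Finset (Fin n)) : ℍ[ℝ] :=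
  ∑ τ ∈ permsOn S, qsign τ * ((leadersIn S τ).map (cycProd A τ)).prod

lemma isSelfAdjoint_cycleSum (hA : A.IsHermitian) (B : Finset (Fin n)) (x : Fin n) :
    IsSelfAdjoint (cycleSum A B x) := by
  rw [IsSelfAdjoint, cycleSum, star_sum]
  refine sum_nbij' (·⁻¹) (·⁻¹) (fun c hc => inv_mem_cyclesOn hc)
    (fun c hc => inv_mem_cyclesOn hc) (fun c _ => inv_inv c) (fun c _ => inv_inv c) fun c _ => ?_
  rw [star_mul, star_cycProd hA, (isSelfAdjoint_qsign c).star_eq, ← (commute_qsign c _).eq,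
    qsign_inv]

lemma cycleSum_eq_of_mem (hA : A.IsHermitian) (hx : x ∈ B) (hy : y ∈ B) :
    cycleSum A B x = cycleSum A B y := by
  have hre : (cycleSum A B x).re = (cycleSum A B y).re := by
    rw [cycleSum, cycleSum, Quaternion.re_sum, Quaternion.re_sum]
    refine sum_congr rfl fun c hc => ?_
    have hxy : c.SameCycle x y := by
      rw [← mem_orbitFinset, (mem_cyclesOn.mp hc).2 x hx]
      exact hy
    rw [re_qsign_mul, re_qsign_mul, re_cycProd_of_sameCycle A hxy]
  rw [Quaternion.star_eq_self.mp (isSelfAdjoint_cycleSum hA B x).star_eq,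
    Quaternion.star_eq_self.mp (isSelfAdjoint_cycleSum hA B y).star_eq, hre]

lemma sum_cyclesOn_qsign_mul_mul (hA : A.IsHermitian) (B : Finset (Fin n)) (b : Fin n)
    (τ : Perm (Fin n)) (X Y : ℍ[ℝ]) :
    ∑ c ∈ cyclesOn B, qsign (c * τ) * (X * (cycProd A c b * Y)) =
      cycleSum A B b * (qsign τ * (X * Y)) := by
  have hT := (isSelfAdjoint_cycleSum hA B b).commute_quaternion
  have hterm : ∀ c : Perm (Fin n), qsign (c * τ) * (X * (cycProd A c b * Y)) =
      qsign τ * (X * (qsign c * cycProd A c b * Y)) := fun c => by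
    rw [qsign_mul, (commute_qsign c _).eq, mul_assoc, (commute_qsign c X).left_comm, mul_assoc]
  simp only [hterm, ← mul_sum, ← sum_mul]
  rw [← cycleSum, (hT X).symm.left_comm, (hT _).symm.left_comm]

lemma minorDet_empty (A : Matrix (Fin n) (Fin n) ℍ[ℝ]) : minorDet A ∅ = 1 := by
  have hlead : leadersIn ∅ (1 : Perm (Fin n)) = [] :=
    List.filter_eq_nil_iff.mpr fun x _ => by simp [isLeaderIn]
  simp [minorDet, permsOn_empty, hlead, qsign_one]

lemma minorDet_eq_sum_cycleSum_mul (hA : A.IsHermitian) (hi : i ∈ S) :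
    minorDet A S = ∑ B ∈ S.powerset.filter (i ∈ ·), cycleSum A B i * minorDet A (S \ B) := by
  rw [minorDet, sum_permsOn_eq_sum_cyclesOn hi]
  refine sum_congr rfl fun B hB => ?_
  obtain ⟨hBS, hiB⟩ : B ⊆ S ∧ i ∈ B := by simpa using hB
  have hB : B.Nonempty := ⟨i, hiB⟩
  obtain ⟨s, t, hst⟩ := List.append_of_mem (List.mem_finRange (B.min' hB))
  -- the cycle on `B` enters the ordered product at its least element
  rw [← cycleSum_eq_of_mem hA (B.min'_mem hB) hiB, minorDet, mul_sum]
  refine sum_congr rfl fun τ hτ => ?_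
  have hτB := apply_eq_self_of_mem_permsOn_sdiff hτ
  rw [leadersIn_sdiff hB hst, List.map_append, List.prod_append,
    ← sum_cyclesOn_qsign_mul_mul hA]
  refine sum_congr rfl fun c hc => ?_
  have hcB := (mem_cyclesOn.mp hc).1
  rw [leadersIn_mul hBS hc hτ hB hst, List.map_append, List.map_cons, List.prod_append,
    List.prod_cons, map_cycProd_mul_filter_isLeaderIn A hcB hτB,
    map_cycProd_mul_filter_isLeaderIn A hcB hτB, cycProd_mul_of_mem A hcB hτB (B.min'_mem hB)]

lemma isSelfAdjoint_minorDet (hA : A.IsHermitian) (S : Finset (Fin n)) :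
    IsSelfAdjoint (minorDet A S) := by
  induction S using Finset.strongInduction with
  | H S ih =>
    obtain rfl | ⟨i, hi⟩ := S.eq_empty_or_nonempty
    · rw [minorDet_empty]
      exact .one _
    rw [IsSelfAdjoint, minorDet_eq_sum_cycleSum_mul hA hi, star_sum]
    refine sum_congr rfl fun B hB => ?_
    obtain ⟨hBS, hiB⟩ : B ⊆ S ∧ i ∈ B := by simpa using hB
    rw [star_mul, (ih _ (sdiff_ssubset hBS ⟨i, hiB⟩)).star_eq,
      (isSelfAdjoint_cycleSum hA B i).star_eq,
      ((isSelfAdjoint_cycleSum hA B i).commute_quaternion _).eq]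

lemma rdet_eq_sum_cycleSum_mul (hA : A.IsHermitian) (i : Fin n) :
    rdet A i = ∑ B ∈ univ.powerset.filter (i ∈ ·), cycleSum A B i * minorDet A (univ \ B) := by
  have hrdet : rdet A i = ∑ σ ∈ permsOn univ,
      qsign σ * (cycProd A σ i * ((leaders σ i).map (cycProd A σ)).prod) := by
    rw [permsOn_univ]
    rfl
  rw [hrdet, sum_permsOn_eq_sum_cyclesOn (mem_univ i)]
  refine sum_congr rfl fun B hB => ?_
  have hiB : i ∈ B := by simpa using hB
  rw [minorDet, mul_sum]
  refine sum_congr rfl fun τ hτ => ?_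
  have hτB := apply_eq_self_of_mem_permsOn_sdiff hτ
  rw [← one_mul (List.prod _), ← sum_cyclesOn_qsign_mul_mul hA]
  refine sum_congr rfl fun c hc => ?_
  have hcB := (mem_cyclesOn.mp hc).1
  rw [one_mul, leaders_mul hc hτB hiB, cycProd_mul_of_mem A hcB hτB hiB, leadersIn,
    map_cycProd_mul_filter_isLeaderIn A hcB hτB]

end Expansion

lemma star_rdet (hA : A.IsHermitian) (j : Fin n) : star (rdet A j) = cdet A j := by
  rw [rdet, cdet, star_sum]
  refine Fintype.sum_equiv (Equiv.inv _) _ _ fun σ => ?_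
  change star (qsign σ * (cycProd A σ j * ((leaders σ j).map (cycProd A σ)).prod)) =
    qsign σ⁻¹ * ((((leaders σ⁻¹ j).reverse).map (cycProd A σ⁻¹)).prod * cycProd A σ⁻¹ j)
  have hstar : star ∘ cycProd A σ = cycProd A σ⁻¹ := funext (star_cycProd hA σ)
  rw [star_mul, star_mul, star_cycProd hA, star_list_prod, ← List.map_reverse, List.map_map,
    hstar, (isSelfAdjoint_qsign σ).star_eq, qsign_inv, leaders_inv, ← (commute_qsign σ _).eq]

end QuaternionDet

open QuaternionDet

/-- for a Hermitian quaternion matrix all row determinants and all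
column determinants coincide, and the common value is real. -/
theorem stmt0 {n : ℕ} (A : Matrix (Fin n) (Fin n) ℍ[ℝ]) (hA : A.IsHermitian) :
    (∀ i j : Fin n, rdet A i = rdet A j) ∧
    (∀ i j : Fin n, cdet A i = cdet A j) ∧
    (∀ i j : Fin n, rdet A i = cdet A j) ∧
    (∀ i : Fin n, ∃ r : ℝ, rdet A i = (r : ℍ[ℝ])) := by
  have hrdet : ∀ i, rdet A i = minorDet A univ := fun i => by
    rw [rdet_eq_sum_cycleSum_mul hA i, minorDet_eq_sum_cycleSum_mul hA (mem_univ i)]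
  have hself := isSelfAdjoint_minorDet hA univ
  have hcdet : ∀ j, cdet A j = minorDet A univ := fun j => by
    rw [← star_rdet hA, hrdet, hself.star_eq]
  exact ⟨fun i j => by rw [hrdet, hrdet], fun i j => by rw [hcdet, hcdet],
    fun i j => by rw [hrdet, hcdet],
    fun i => ⟨(minorDet A univ).re, by rw [hrdet]; exact Quaternion.star_eq_self.mp hself.star_eq⟩⟩
end

section
/- Let A be an n×n matrix over ℍ and b ∈ ℍ. For every i ∈ {1,…,n}, the i-th row determinant of the matrix obtained from A by replacing its i-th row a_{i.} with the left scalar multiple b·a_{i.} equals b · rdet_i A; that is, rdet_i A_{i.}(b·a_{i.}) = b · rdet_i A. -/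
open Quaternion Matrix Finset

/-! In every term of `rdet_i`, row `i` contributes exactly one factor, the leftmost one
`a_{i,σ(i)}`: the cycle of `i` returns to `i` only at its end, and the other cycles avoid `i`.
So the row scaling pulls `b` out on the left, past the real sign `±1`, which is central. -/

open Function

namespace Equiv.Perm

variable {α : Type*} [Finite α]

theorem minimalPeriod_pos (σ : Perm α) (x : α) : 0 < minimalPeriod σ x :=
  minimalPeriod_pos_of_mem_periodicPts (σ.injective.mem_periodicPts x)

theorem SameCycle.exists_iterate_lt_minimalPeriod {σ : Perm α} {x y : α}
    (h : σ.SameCycle x y) : ∃ t < minimalPeriod σ x, σ^[t] x = y := by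
  obtain ⟨k, hk⟩ := h.exists_nat_pow_eq
  refine ⟨k % minimalPeriod σ x, Nat.mod_lt _ (minimalPeriod_pos σ x), ?_⟩
  rw [iterate_mod_minimalPeriod_eq, iterate_eq_pow, hk]

end Equiv.Perm

section RowDeterminant

variable {n : ℕ}

theorem inCycleB_of_sameCycle {σ : Equiv.Perm (Fin n)} {i x : Fin n} (h : σ.SameCycle i x) :
    inCycleB σ i x = true := by
  obtain ⟨t, ht, hx⟩ := h.exists_iterate_lt_minimalPeriod
  have hn : minimalPeriod σ i ≤ n := by simpa using minimalPeriod_le_card (f := σ) (x := i)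
  simp only [inCycleB, List.any_eq_true, List.mem_range, decide_eq_true_eq]
  exact ⟨t, ht.trans_le hn, hx⟩

theorem not_sameCycle_of_mem_leaders {σ : Equiv.Perm (Fin n)} {i x : Fin n}
    (hx : x ∈ leaders σ i) : ¬ σ.SameCycle i x := fun h => by
  simp [leaders, inCycleB_of_sameCycle h] at hx

theorem cycProd_updateRow_of_not_sameCycle (A : Matrix (Fin n) (Fin n) ℍ[ℝ])
    (f : Fin n → ℍ[ℝ]) (σ : Equiv.Perm (Fin n)) {i x : Fin n} (h : ¬ σ.SameCycle i x) :
    cycProd (A.updateRow i f) σ x = cycProd A σ x := by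
  refine congrArg List.prod <| List.map_congr_left fun t _ =>
    congrFun (updateRow_ne fun he => h ?_) _
  rw [← he, Equiv.Perm.iterate_eq_pow]
  exact Equiv.Perm.sameCycle_pow_left.mpr (.refl σ x)

theorem cycProd_updateRow_self_mul_left (A : Matrix (Fin n) (Fin n) ℍ[ℝ]) (b : ℍ[ℝ])
    (σ : Equiv.Perm (Fin n)) (i : Fin n) :
    cycProd (A.updateRow i fun t => b * A i t) σ i = b * cycProd A σ i := by
  obtain ⟨m, hm⟩ := Nat.exists_eq_succ_of_ne_zero (Equiv.Perm.minimalPeriod_pos σ i).ne'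
  simp only [cycProd, hm, List.range_succ_eq_map, List.map_cons, List.prod_cons, List.map_map,
    iterate_zero, id_eq, updateRow_self, mul_assoc]
  congr 3
  refine List.map_congr_left fun t ht => ?_
  have hne : σ^[t + 1] i ≠ i := not_isPeriodicPt_of_pos_of_lt_minimalPeriod t.succ_ne_zero <| by
    rw [hm]; exact Nat.succ_lt_succ (List.mem_range.mp ht)
  rw [Function.comp_apply, Function.comp_apply, updateRow_ne hne]

end RowDeterminant

/-- `rdet_i A_{i.}(b·a_{i.}) = b · rdet_i A`. -/
theorem stmt1 {n : ℕ} (A : Matrix (Fin n) (Fin n) ℍ[ℝ]) (b : ℍ[ℝ]) (i : Fin n) :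
    rdet (A.updateRow i fun t => b * A i t) i = b * rdet A i := by
  have hleaders (σ : Equiv.Perm (Fin n)) :
      ((leaders σ i).map (cycProd (A.updateRow i fun t => b * A i t) σ)).prod
        = ((leaders σ i).map (cycProd A σ)).prod :=
    congrArg List.prod <| List.map_congr_left fun x hx =>
      cycProd_updateRow_of_not_sameCycle A _ σ (not_sameCycle_of_mem_leaders hx)
  simp only [rdet, mul_sum, cycProd_updateRow_self_mul_left, hleaders, mul_assoc]
  exact sum_congr rfl fun σ _ => (Int.cast_commute _ b).left_comm _
end

section
/- Let A be an n×n matrix over ℍ and b ∈ ℍ. For every j ∈ {1,…,n}, the j-th column determinant of the matrix obtained from A by replacing its j-th column a_{.j} with the right scalar multiple a_{.j}·b equals cdet_j A · b; that is, cdet_j A_{.j}(a_{.j}·b) = (cdet_j A)·b. -/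
open Quaternion Matrix Finset

/-! Column `j` of `A` is entered only by the factor `a_{σ⁻¹j, j}`, which closes the cycle of `j`
and is therefore the rightmost factor of every monomial of `cdet_j A`. Replacing that column by
`a_{.j} b` thus multiplies each monomial on the right by `b`, leaving all other factors alone. -/

open Function

variable {n : ℕ}

lemma inCycleB_of_iterate_succ_eq {σ : Equiv.Perm (Fin n)} {x j : Fin n} {t : ℕ}
    (ht : t < minimalPeriod σ x) (h : σ^[t + 1] x = j) : inCycleB σ j x = true := by
  have hback : σ^[minimalPeriod σ x - (t + 1)] j = x := by
    rw [← h, ← iterate_add_apply, Nat.sub_add_cancel ht, iterate_minimalPeriod]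
  have hlt : minimalPeriod σ x - (t + 1) < n := by
    have := minimalPeriod_le_card (f := σ) (x := x)
    rw [Fintype.card_fin] at this
    omega
  simp only [inCycleB, List.any_eq_true, List.mem_range, decide_eq_true_eq]
  exact ⟨_, hlt, hback⟩

lemma inCycleB_eq_false_of_mem_leaders {σ : Equiv.Perm (Fin n)} {i x : Fin n}
    (hx : x ∈ leaders σ i) : inCycleB σ i x = false := by
  simp only [leaders, List.mem_filter, List.mem_finRange, Bool.and_eq_true, Bool.not_eq_true',
    true_and] at hx
  exact hx.2

lemma cycProd_updateCol_of_inCycleB_eq_false (A : Matrix (Fin n) (Fin n) ℍ[ℝ])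
    (c : Fin n → ℍ[ℝ]) (σ : Equiv.Perm (Fin n)) {x j : Fin n}
    (hx : inCycleB σ j x = false) :
    cycProd (A.updateCol j c) σ x = cycProd A σ x := by
  refine congrArg List.prod (List.map_congr_left fun t ht => ?_)
  have hne : σ^[t + 1] x ≠ j := fun h => by
    simp [inCycleB_of_iterate_succ_eq (List.mem_range.mp ht) h] at hx
  rw [Matrix.updateCol_ne hne]

lemma cycProd_updateCol_mul_right_self (A : Matrix (Fin n) (Fin n) ℍ[ℝ]) (b : ℍ[ℝ])
    (σ : Equiv.Perm (Fin n)) (j : Fin n) :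
    cycProd (A.updateCol j fun s => A s j * b) σ j = cycProd A σ j * b := by
  obtain ⟨m, hm⟩ : ∃ m, minimalPeriod σ j = m + 1 :=
    Nat.exists_eq_add_one.mpr <| minimalPeriod_pos_of_mem_periodicPts <|
      σ.injective.mem_periodicPts j
  have hprefix : ∀ t ∈ List.range m,
      A.updateCol j (fun s => A s j * b) (σ^[t] j) (σ^[t + 1] j) = A (σ^[t] j) (σ^[t + 1] j) :=
    fun t ht => Matrix.updateCol_ne fun h =>
      not_isPeriodicPt_of_pos_of_lt_minimalPeriod t.succ_ne_zero
        (by rw [hm]; have := List.mem_range.mp ht; omega) h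
  have hclose : σ^[m + 1] j = j := hm ▸ iterate_minimalPeriod
  simp only [cycProd, hm, List.range_succ, List.map_append, List.prod_append, List.map_singleton,
    List.prod_singleton, List.map_congr_left hprefix, hclose, Matrix.updateCol_self, mul_assoc]

/-- `cdet_j A_{.j}(a_{.j}·b) = (cdet_j A)·b`. -/
theorem stmt2 {n : ℕ} (A : Matrix (Fin n) (Fin n) ℍ[ℝ]) (b : ℍ[ℝ]) (j : Fin n) :
    cdet (A.updateCol j fun s => A s j * b) j = cdet A j * b := by
  simp only [cdet, Finset.sum_mul]
  refine Finset.sum_congr rfl fun σ _ => ?_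
  have hleaders : ((leaders σ j).reverse).map (cycProd (A.updateCol j fun s => A s j * b) σ) =
      ((leaders σ j).reverse).map (cycProd A σ) :=
    List.map_congr_left fun x hx => cycProd_updateCol_of_inCycleB_eq_false A _ σ
      (inCycleB_eq_false_of_mem_leaders (List.mem_reverse.mp hx))
  rw [hleaders, cycProd_updateCol_mul_right_self]
  simp only [mul_assoc]
end

section
/- Let A be an n×n matrix over ℍ and A* its conjugate-transpose. Then for every i ∈ {1,…,n}, rdet_i(A*) equals the quaternion conjugate of cdet_i A. -/
/-!
Conjugation reverses products, and `Aᴴ` swaps the two indices of each entry, so the ordered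
product of `Aᴴ` along a cycle of `σ` starting at `x` is the conjugate of the product of `A` along
the same cycle traversed backwards, i.e. along the cycle of `σ⁻¹` starting at `x`. Since `σ⁻¹` has
the same cycles, the same cycle leaders and the same sign as `σ`, reversing the whole product
turns the `σ`-summand of `rdet_i Aᴴ` into the conjugate of the `σ⁻¹`-summand of `cdet_i A`.
-/

open Quaternion Matrix Finset

open Function

theorem star_list_prod_s3 {R : Type*} [Monoid R] [StarMul R] (l : List R) :
    star l.prod = (l.map star).reverse.prod :=
  unop_map_list_prod (starMulEquiv (R := R)) l

namespace Equiv.Perm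

variable {α : Type*} (σ : Perm α) (x : α)

theorem minimalPeriod_inv : minimalPeriod (⇑σ⁻¹) x = minimalPeriod σ x :=
  MulAction.period_inv σ x

theorem iterate_inv_apply_of_le {s : ℕ} (hs : s ≤ minimalPeriod σ x) :
    (⇑σ⁻¹)^[s] x = σ^[minimalPeriod σ x - s] x := by
  conv_lhs => rw [← iterate_minimalPeriod (f := σ) (x := x), ← Nat.add_sub_cancel' hs,
    iterate_add_apply]
  exact σ.left_inv.iterate s _

theorem SameCycle.exists_iterate_lt_card_eq [Fintype α] {σ : Perm α} {x y : α}
    (h : σ.SameCycle x y) : ∃ t < Fintype.card α, σ^[t] x = y := by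
  obtain ⟨k, rfl⟩ := h.exists_nat_pow_eq
  have hpos := minimalPeriod_pos_of_mem_periodicPts (σ.injective.mem_periodicPts x)
  exact ⟨k % minimalPeriod σ x, (Nat.mod_lt _ hpos).trans_le minimalPeriod_le_card,
    by rw [iterate_mod_minimalPeriod_eq, iterate_eq_pow]⟩

end Equiv.Perm

section CycleNotation

variable {n : ℕ} (σ : Equiv.Perm (Fin n))

theorem inCycleB_iff_sameCycle (i x : Fin n) : inCycleB σ i x = true ↔ σ.SameCycle i x := by
  simp only [inCycleB, List.any_eq_true, List.mem_range, decide_eq_true_eq]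
  constructor
  · rintro ⟨t, -, rfl⟩
    exact ⟨t, by rw [zpow_natCast, Equiv.Perm.iterate_eq_pow]⟩
  · intro h
    simpa using h.exists_iterate_lt_card_eq

theorem isLeaderB_iff (x : Fin n) : isLeaderB σ x = true ↔ ∀ y, σ.SameCycle x y → x ≤ y := by
  simp only [isLeaderB, List.all_eq_true, List.mem_range, decide_eq_true_eq]
  constructor
  · intro h y hxy
    obtain ⟨t, ht, rfl⟩ := hxy.exists_iterate_lt_card_eq
    exact h t (by simpa using ht)
  · intro h t _
    exact h _ ⟨t, by rw [zpow_natCast, Equiv.Perm.iterate_eq_pow]⟩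

theorem leaders_inv (i : Fin n) : leaders σ⁻¹ i = leaders σ i := by
  have hlead : ∀ x, isLeaderB σ⁻¹ x = isLeaderB σ x := fun x =>
    Bool.eq_iff_iff.mpr <| by simp only [isLeaderB_iff, Equiv.Perm.sameCycle_inv]
  have hcyc : ∀ x, inCycleB σ⁻¹ i x = inCycleB σ i x := fun x =>
    Bool.eq_iff_iff.mpr <| by simp only [inCycleB_iff_sameCycle, Equiv.Perm.sameCycle_inv]
  simp only [leaders, hlead, hcyc]

theorem cycProd_conjTranspose (A : Matrix (Fin n) (Fin n) ℍ[ℝ]) (x : Fin n) :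
    cycProd Aᴴ σ x = star (cycProd A σ⁻¹ x) := by
  unfold cycProd
  rw [star_list_prod_s3, Equiv.Perm.minimalPeriod_inv, List.map_map, ← List.map_reverse]
  congr 1
  refine List.ext_getElem (by simp) fun t h _ => ?_
  set c := minimalPeriod σ x
  have ht : t < c := by simpa using h
  have e1 : (⇑σ⁻¹)^[c - 1 - t] x = σ^[t + 1] x := by
    rw [Equiv.Perm.iterate_inv_apply_of_le σ x (by omega)]; congr 1; omega
  have e2 : (⇑σ⁻¹)^[c - 1 - t + 1] x = σ^[t] x := by
    rw [Equiv.Perm.iterate_inv_apply_of_le σ x (by omega)]; congr 1; omega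
  simp only [List.getElem_map, List.getElem_reverse, List.getElem_range, List.length_range,
    Function.comp_apply, conjTranspose_apply]
  rw [e1, e2]

end CycleNotation

/-- `rdet_i (A*) = conj (cdet_i A)`. -/
theorem stmt3 {n : ℕ} (A : Matrix (Fin n) (Fin n) ℍ[ℝ]) (i : Fin n) :
    rdet Aᴴ i = star (cdet A i) := by
  rw [rdet, cdet, star_sum]
  refine Fintype.sum_equiv (Equiv.inv (Equiv.Perm (Fin n))) _ _ fun σ => ?_
  simp only [Equiv.inv_apply]
  rw [StarMul.star_mul, StarMul.star_mul, star_intCast, Equiv.Perm.sign_inv]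
  have hQ : star (cycProd A σ⁻¹ i) = cycProd Aᴴ σ i := (cycProd_conjTranspose σ A i).symm
  have hP : star (((leaders σ⁻¹ i).reverse.map (cycProd A σ⁻¹)).prod)
      = ((leaders σ i).map (cycProd Aᴴ σ)).prod := by
    simp only [star_list_prod_s3, List.map_reverse, List.reverse_reverse, List.map_map, leaders_inv]
    exact congrArg List.prod (List.map_congr_left fun y _ => (cycProd_conjTranspose σ A y).symm)
  rw [hQ, hP]
  exact ((Int.cast_commute ((Equiv.Perm.sign σ : ℤ)) _).eq)
end

section
/- Let A be an n×n matrix over ℍ with n ≥ 2. For every i ∈ {1,…,n}, rdet_i A = Σ_{j=1}^{n} a_{ij}·R_{ij}, where the right ij-th cofactor is R_{ij} = −rdet_j (A_{.j}(a_{.i}))^{ii} for j ≠ i (replace the j-th column of A by the i-th column of A, then delete the i-th row and the i-th column, and take the j-th row determinant with the row indexing inherited from A), and R_{ii} = rdet_k A^{ii}, where k = min({1,…,n}∖{i}) and A^{ii} is the submatrix of A obtained by deleting its i-th row and i-th column. -/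
open Quaternion Matrix Finset

/-!
Group the permutations `σ` of `Fin (n + 2)` by `j = σ i`, writing `σ` as the pair `(j, τ)` with
`τ` a permutation of the complement of `i`. If `σ i = i`, the cycle of `i` contributes `a_ii`, and
the other cycles of `σ` are those of `τ`, the cycle through the smallest element of the complement
coming first: this is the `τ`-term of `rdet_k A^{ii}`. If `σ i = j ≠ i`, then `σ` is `τ` with `i`
inserted into its cycle `(j … l)` just before `j`; this changes the sign, and the closing factor
`a_{l i}` of the cycle `(i j … l)` is the `(l, j)` entry of `A_{.j}(a_{.i})`, so the `σ`-term is
`a_ij` times minus the `τ`-term of `rdet_j (A_{.j}(a_{.i}))^{ii}`. In both cases the remaining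
cycles keep their left ordering because `succAbove` is monotone.
-/

open Equiv Function

section Iterate

variable {α β : Type*} {f : α → α} {h : β → β} {g : β → α} {y : β}

lemma iterate_apply_eq_of_forall_lt {k : ℕ} (hk : ∀ t < k, f (g (h^[t] y)) = g (h^[t + 1] y)) :
    f^[k] (g y) = g (h^[k] y) := by
  induction k with
  | zero => rfl
  | succ k ih =>
    rw [iterate_succ_apply', ih fun t ht => hk t (ht.trans k.lt_succ_self), hk k k.lt_succ_self]

lemma minimalPeriod_eq_of_iterate (hg : Injective g) (hiter : ∀ k, f^[k] (g y) = g (h^[k] y)) :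
    minimalPeriod f (g y) = minimalPeriod h y :=
  minimalPeriod_eq_minimalPeriod_iff.2 fun k => by
    simp only [IsPeriodicPt, IsFixedPt, hiter, hg.eq_iff]

end Iterate

section Cycles

variable {m m' : ℕ}

lemma minimalPeriod_perm_pos (σ : Perm (Fin m)) (x : Fin m) : 0 < minimalPeriod σ x :=
  minimalPeriod_pos_of_mem_periodicPts (σ.injective.mem_periodicPts x)

lemma iterate_ne_self_of_lt_minimalPeriod (σ : Perm (Fin m)) {x : Fin m} {t : ℕ} (ht : 0 < t)
    (htp : t < minimalPeriod σ x) : σ^[t] x ≠ x :=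
  fun hx => (IsPeriodicPt.minimalPeriod_le ht hx).not_gt htp

lemma exists_iterate_lt_iff (σ : Perm (Fin m)) (x : Fin m) (P : Fin m → Prop) :
    (∃ t < m, P (σ^[t] x)) ↔ ∃ t, P (σ^[t] x) := by
  refine ⟨fun ⟨t, _, ht⟩ => ⟨t, ht⟩, fun ⟨t, ht⟩ => ⟨t % minimalPeriod σ x, ?_, ?_⟩⟩
  · exact (Nat.mod_lt _ (minimalPeriod_perm_pos σ x)).trans_le
      (by simpa using minimalPeriod_le_card (f := σ) (x := x))
  · rwa [iterate_mod_minimalPeriod_eq]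

lemma sameCycle_iff_exists_iterate {α : Type*} [Finite α] {σ : Perm α} {x y : α} :
    σ.SameCycle x y ↔ ∃ t : ℕ, σ^[t] x = y := by
  simp only [Perm.iterate_eq_pow]
  exact ⟨Perm.SameCycle.exists_nat_pow_eq, fun ⟨t, ht⟩ => ⟨t, by simpa using ht⟩⟩

lemma inCycleB_iff (σ : Perm (Fin m)) (i x : Fin m) : inCycleB σ i x ↔ σ.SameCycle i x := by
  simpa [inCycleB, sameCycle_iff_exists_iterate] using exists_iterate_lt_iff σ i (· = x)

lemma isLeaderB_iff_s4 (σ : Perm (Fin m)) (x : Fin m) : isLeaderB σ x ↔ ∀ t, x ≤ σ^[t] x := by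
  simpa [isLeaderB] using (exists_iterate_lt_iff σ x (¬ x ≤ ·)).not

lemma mem_leaders_iff (σ : Perm (Fin m)) (i x : Fin m) :
    x ∈ leaders σ i ↔ isLeaderB σ x ∧ ¬ σ.SameCycle i x := by
  simp [leaders, ← inCycleB_iff]

lemma pairwise_leaders (σ : Perm (Fin m)) (i : Fin m) : (leaders σ i).Pairwise (· < ·) :=
  (List.pairwise_lt_finRange m).filter _

lemma isLeaderB_eq_of_iterate {σ : Perm (Fin m)} {τ : Perm (Fin m')} {g : Fin m' → Fin m}
    (hg : StrictMono g) {y : Fin m'} (hiter : ∀ k, σ^[k] (g y) = g (τ^[k] y)) :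
    isLeaderB σ (g y) = isLeaderB τ y := by
  rw [Bool.eq_iff_iff, isLeaderB_iff_s4, isLeaderB_iff_s4]
  simp only [hiter, hg.le_iff_le]

lemma isLeaderB_iff_eq_zero_or_mem_leaders (τ : Perm (Fin (m + 1))) (y : Fin (m + 1)) :
    isLeaderB τ y ↔ y = 0 ∨ y ∈ leaders τ 0 := by
  rw [mem_leaders_iff, isLeaderB_iff_s4]
  constructor
  · intro hy
    refine or_iff_not_imp_left.2 fun hy0 => ⟨hy, fun hsc => hy0 ?_⟩
    obtain ⟨t, ht⟩ := sameCycle_iff_exists_iterate.1 hsc.symm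
    exact Fin.le_zero_iff.1 (ht ▸ hy t)
  · rintro (rfl | ⟨hy, -⟩)
    · exact fun _ => Fin.zero_le _
    · exact hy

lemma pairwise_zero_cons_leaders (τ : Perm (Fin (m + 1))) :
    (0 :: leaders τ 0).Pairwise (· < ·) :=
  List.pairwise_cons.2 ⟨fun y hy => Fin.pos_of_ne_zero fun hy0 =>
    ((mem_leaders_iff τ 0 y).1 hy).2 (hy0 ▸ Perm.SameCycle.refl τ 0), pairwise_leaders τ 0⟩

lemma leaders_eq_map_succAbove {σ : Perm (Fin (m + 1))} {i : Fin (m + 1)} {l : List (Fin m)}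
    (hl : l.Pairwise (· < ·)) (hmem : ∀ y, i.succAbove y ∈ leaders σ i ↔ y ∈ l) :
    leaders σ i = l.map i.succAbove := by
  refine (pairwise_leaders σ i).eq_of_mem_iff
    (List.pairwise_map.2 (hl.imp fun h => Fin.strictMono_succAbove i h)) fun x => ?_
  by_cases hx : x = i
  · subst hx
    simp only [mem_leaders_iff, Perm.SameCycle.refl, not_true_eq_false, and_false, false_iff,
      List.mem_map, not_exists, not_and]
    exact fun y _ => Fin.succAbove_ne x y
  · obtain ⟨y, rfl⟩ := Fin.exists_succAbove_eq hx
    rw [hmem, List.mem_map_of_injective Fin.succAbove_right_injective]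

lemma cycProd_eq_mul {A : Matrix (Fin m) (Fin m) ℍ[ℝ]} {σ : Perm (Fin m)} {x : Fin m} {p : ℕ}
    (hp : minimalPeriod σ x = p + 1) :
    cycProd A σ x =
      A x (σ x) * ((List.range p).map fun t => A (σ^[t + 1] x) (σ (σ^[t + 1] x))).prod := by
  rw [cycProd, hp, List.range_succ_eq_map, List.map_cons, List.prod_cons, List.map_map]
  congr 2
  refine List.map_congr_left fun t _ => ?_
  rw [Function.comp_apply, iterate_succ_apply' _ (t + 1)]

lemma cycProd_eq_of_iterate {A : Matrix (Fin m) (Fin m) ℍ[ℝ]}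
    {B : Matrix (Fin m') (Fin m') ℍ[ℝ]} {σ : Perm (Fin m)} {τ : Perm (Fin m')}
    {g : Fin m' → Fin m} (hg : Injective g) {y : Fin m'}
    (hiter : ∀ k, σ^[k] (g y) = g (τ^[k] y)) (hstep : ∀ z, A (g z) (σ (g z)) = B z (τ z)) :
    cycProd A σ (g y) = cycProd B τ y := by
  rw [cycProd, cycProd, minimalPeriod_eq_of_iterate hg hiter]
  congr 1
  refine List.map_congr_left fun t _ => ?_
  rw [iterate_succ_apply', hiter, hstep, iterate_succ_apply']

end Cycles

section Insert

variable {m : ℕ}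

/-- `insertAt i (none, τ)` fixes `i` and acts as `τ` on its complement; `insertAt i (some j, τ)`
inserts `i` into the cycle of `τ` through `j`, just before `j`. -/
def insertAt (i : Fin (m + 1)) : Option (Fin m) × Perm (Fin m) ≃ Perm (Fin (m + 1)) :=
  Perm.decomposeOption.symm.trans (permCongr (finSuccEquiv' i).symm)

lemma insertAt_apply_self (i : Fin (m + 1)) (o : Option (Fin m)) (τ : Perm (Fin m)) :
    insertAt i (o, τ) i = (finSuccEquiv' i).symm o := by
  simp [insertAt, permCongr_apply, finSuccEquiv'_at]

lemma insertAt_apply_succAbove (i : Fin (m + 1)) (o : Option (Fin m)) (τ : Perm (Fin m))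
    (y : Fin m) :
    insertAt i (o, τ) (i.succAbove y) = (finSuccEquiv' i).symm (swap none o (some (τ y))) := by
  simp [insertAt, permCongr_apply, finSuccEquiv'_succAbove]

lemma sign_insertAt (i : Fin (m + 1)) (o : Option (Fin m)) (τ : Perm (Fin m)) :
    Perm.sign (insertAt i (o, τ)) = Perm.sign (swap none o) * Perm.sign τ := by
  rw [insertAt, trans_apply, Perm.sign_permCongr, Perm.decomposeOption_symm_apply,
    Perm.sign_mul, optionCongr_sign]

lemma insertAt_none_apply_self (i : Fin (m + 1)) (τ : Perm (Fin m)) :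
    insertAt i (none, τ) i = i := by
  rw [insertAt_apply_self, finSuccEquiv'_symm_none]

lemma insertAt_none_apply_succAbove (i : Fin (m + 1)) (τ : Perm (Fin m)) (y : Fin m) :
    insertAt i (none, τ) (i.succAbove y) = i.succAbove (τ y) := by
  rw [insertAt_apply_succAbove, swap_self, refl_apply, finSuccEquiv'_symm_some]

lemma insertAt_some_apply_self (i : Fin (m + 1)) (j : Fin m) (τ : Perm (Fin m)) :
    insertAt i (some j, τ) i = i.succAbove j := by
  rw [insertAt_apply_self, finSuccEquiv'_symm_some]

lemma insertAt_some_apply_succAbove (i : Fin (m + 1)) (j : Fin m) (τ : Perm (Fin m))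
    (y : Fin m) :
    insertAt i (some j, τ) (i.succAbove y) = if τ y = j then i else i.succAbove (τ y) := by
  rw [insertAt_apply_succAbove]
  split_ifs with hy
  · rw [hy, swap_apply_right, finSuccEquiv'_symm_none]
  · rw [swap_apply_of_ne_of_ne (Option.some_ne_none _) (by simpa using hy),
      finSuccEquiv'_symm_some]

end Insert

section InsertCycle

variable {m : ℕ} (i : Fin (m + 1)) (j : Fin m) (τ : Perm (Fin m))

lemma insertAt_some_iterate_succ_self {t : ℕ} (ht : t < minimalPeriod τ j) :
    (insertAt i (some j, τ))^[t + 1] i = i.succAbove (τ^[t] j) := by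
  rw [iterate_succ_apply, insertAt_some_apply_self]
  refine iterate_apply_eq_of_forall_lt fun s hs => ?_
  have hne : τ^[s + 1] j ≠ j := iterate_ne_self_of_lt_minimalPeriod τ s.succ_pos (by omega)
  rw [iterate_succ_apply'] at hne
  rw [insertAt_some_apply_succAbove, if_neg hne, iterate_succ_apply']

lemma minimalPeriod_insertAt_some_self :
    minimalPeriod (insertAt i (some j, τ)) i = minimalPeriod τ j + 1 := by
  set σ := insertAt i (some j, τ)
  obtain ⟨p, hp⟩ := Nat.exists_eq_add_one_of_ne_zero (minimalPeriod_perm_pos τ j).ne'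
  have hper : IsPeriodicPt σ (p + 2) i := by
    have hperτ := iterate_minimalPeriod (f := τ) (x := j)
    rw [hp, iterate_succ_apply'] at hperτ
    rw [IsPeriodicPt, IsFixedPt, iterate_succ_apply',
      insertAt_some_iterate_succ_self i j τ (by omega), insertAt_some_apply_succAbove, if_pos hperτ]
  refine le_antisymm (hp ▸ hper.minimalPeriod_le (by omega)) (not_lt.1 fun hlt => ?_)
  obtain ⟨s, hs⟩ := Nat.exists_eq_add_one_of_ne_zero (minimalPeriod_perm_pos σ i).ne'
  have hfix := iterate_minimalPeriod (f := σ) (x := i)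
  rw [hs, insertAt_some_iterate_succ_self i j τ (by omega)] at hfix
  exact Fin.succAbove_ne i _ hfix

lemma insertAt_some_iterate_succAbove {y : Fin m} (hy : ¬ τ.SameCycle j y) (k : ℕ) :
    (insertAt i (some j, τ))^[k] (i.succAbove y) = i.succAbove (τ^[k] y) := by
  refine iterate_apply_eq_of_forall_lt fun t _ => ?_
  have hne : τ^[t + 1] y ≠ j := fun h => hy (sameCycle_iff_exists_iterate.2 ⟨_, h⟩).symm
  rw [iterate_succ_apply'] at hne
  rw [insertAt_some_apply_succAbove, if_neg hne, iterate_succ_apply']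

lemma sameCycle_insertAt_some_succAbove (y : Fin m) :
    (insertAt i (some j, τ)).SameCycle i (i.succAbove y) ↔ τ.SameCycle j y := by
  refine ⟨fun h => by_contra fun hy => ?_, fun h => ?_⟩
  · obtain ⟨k, hk⟩ := sameCycle_iff_exists_iterate.1 h.symm
    rw [insertAt_some_iterate_succAbove i j τ hy] at hk
    exact Fin.succAbove_ne i _ hk
  · obtain ⟨t, rfl⟩ := sameCycle_iff_exists_iterate.1 h
    refine sameCycle_iff_exists_iterate.2 ⟨t % minimalPeriod τ j + 1, ?_⟩
    rw [insertAt_some_iterate_succ_self i j τ (Nat.mod_lt _ (minimalPeriod_perm_pos τ j)),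
      iterate_mod_minimalPeriod_eq]

lemma leaders_insertAt_some :
    leaders (insertAt i (some j, τ)) i = (leaders τ j).map i.succAbove :=
  leaders_eq_map_succAbove (pairwise_leaders τ j) fun y => by
    rw [mem_leaders_iff, mem_leaders_iff, sameCycle_insertAt_some_succAbove]
    exact and_congr_left fun hy => by
      rw [isLeaderB_eq_of_iterate (Fin.strictMono_succAbove i)
        (insertAt_some_iterate_succAbove i j τ hy)]

lemma cycProd_insertAt_some_self {A : Matrix (Fin (m + 1)) (Fin (m + 1)) ℍ[ℝ]}
    {B : Matrix (Fin m) (Fin m) ℍ[ℝ]}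
    (hstep : ∀ z, A (i.succAbove z) (insertAt i (some j, τ) (i.succAbove z)) = B z (τ z)) :
    cycProd A (insertAt i (some j, τ)) i = A i (i.succAbove j) * cycProd B τ j := by
  rw [cycProd_eq_mul (minimalPeriod_insertAt_some_self i j τ), insertAt_some_apply_self,
    cycProd]
  congr 2
  refine List.map_congr_left fun t ht => ?_
  rw [insertAt_some_iterate_succ_self i j τ (List.mem_range.1 ht), hstep, iterate_succ_apply']

end InsertCycle

section RowDeterminant

variable {m : ℕ}

noncomputable def rdetTerm (A : Matrix (Fin m) (Fin m) ℍ[ℝ]) (i : Fin m) (σ : Perm (Fin m)) :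
    ℍ[ℝ] :=
  ((Perm.sign σ : ℤ) : ℍ[ℝ]) * (cycProd A σ i * ((leaders σ i).map (cycProd A σ)).prod)

lemma rdet_eq_sum_rdetTerm (A : Matrix (Fin m) (Fin m) ℍ[ℝ]) (i : Fin m) :
    rdet A i = ∑ σ, rdetTerm A i σ :=
  rfl

lemma rdetTerm_insertAt_none (A : Matrix (Fin (m + 2)) (Fin (m + 2)) ℍ[ℝ]) (i : Fin (m + 2))
    (τ : Perm (Fin (m + 1))) :
    rdetTerm A i (insertAt i (none, τ)) =
      A i i * rdetTerm (A.submatrix i.succAbove i.succAbove) 0 τ := by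
  set σ := insertAt i (none, τ)
  have hiter : ∀ y k, σ^[k] (i.succAbove y) = i.succAbove (τ^[k] y) := fun y k =>
    ((Semiconj.iterate_right (fun z => (insertAt_none_apply_succAbove i τ z).symm) k) y).symm
  have hcyc : ∀ y, cycProd A σ (i.succAbove y) =
      cycProd (A.submatrix i.succAbove i.succAbove) τ y := fun y =>
    cycProd_eq_of_iterate Fin.succAbove_right_injective (hiter y)
      fun z => by rw [insertAt_none_apply_succAbove]; rfl
  have hcycI : cycProd A σ i = A i i := by
    rw [cycProd_eq_mul (p := 0)
      (minimalPeriod_eq_one_iff_isFixedPt.2 (insertAt_none_apply_self i τ)),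
      insertAt_none_apply_self]
    simp
  have hlead : leaders σ i = (0 :: leaders τ 0).map i.succAbove := by
    refine leaders_eq_map_succAbove (pairwise_zero_cons_leaders τ) fun y => ?_
    have hy : ¬ σ.SameCycle i (i.succAbove y) := fun h => by
      obtain ⟨k, hk⟩ := sameCycle_iff_exists_iterate.1 h.symm
      exact Fin.succAbove_ne i _ ((hiter y k).symm.trans hk)
    rw [mem_leaders_iff, isLeaderB_eq_of_iterate (Fin.strictMono_succAbove i) (hiter y),
      isLeaderB_iff_eq_zero_or_mem_leaders, List.mem_cons]
    simp [hy]
  rw [rdetTerm, rdetTerm, sign_insertAt, swap_self, Perm.sign_refl, one_mul, hcycI, hlead]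
  simp only [List.map_cons, List.map_map, List.prod_cons]
  rw [hcyc 0, show cycProd A σ ∘ i.succAbove = _ from funext hcyc]
  exact (Int.cast_commute (Perm.sign τ : ℤ) (A i i)).left_comm _

lemma updateCol_submatrix_apply_insertAt_some (A : Matrix (Fin (m + 1)) (Fin (m + 1)) ℍ[ℝ])
    (i : Fin (m + 1)) (j : Fin m) (τ : Perm (Fin m)) (z : Fin m) :
    A (i.succAbove z) (insertAt i (some j, τ) (i.succAbove z)) =
      (A.updateCol (i.succAbove j) fun l => A l i).submatrix i.succAbove i.succAbove z (τ z) := by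
  rw [insertAt_some_apply_succAbove, submatrix_apply]
  split_ifs with hz
  · rw [hz, updateCol_self]
  · rw [updateCol_ne (Fin.succAbove_right_injective.ne hz)]

lemma rdetTerm_insertAt_some (A : Matrix (Fin (m + 1)) (Fin (m + 1)) ℍ[ℝ]) (i : Fin (m + 1))
    (j : Fin m) (τ : Perm (Fin m)) :
    rdetTerm A i (insertAt i (some j, τ)) =
      A i (i.succAbove j) *
        -rdetTerm ((A.updateCol (i.succAbove j) fun l => A l i).submatrix
          i.succAbove i.succAbove) j τ := by
  set σ := insertAt i (some j, τ)
  have hstep := updateCol_submatrix_apply_insertAt_some A i j τ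
  have hcyc : ∀ y ∈ leaders τ j, cycProd A σ (i.succAbove y) =
      cycProd ((A.updateCol (i.succAbove j) fun l => A l i).submatrix i.succAbove i.succAbove)
        τ y := fun y hy =>
    cycProd_eq_of_iterate Fin.succAbove_right_injective
      (insertAt_some_iterate_succAbove i j τ ((mem_leaders_iff τ j y).1 hy).2) hstep
  rw [rdetTerm, rdetTerm, sign_insertAt, Perm.sign_swap (Option.some_ne_none j).symm,
    cycProd_insertAt_some_self i j τ hstep, leaders_insertAt_some, List.map_map,
    List.map_congr_left (f := cycProd A σ ∘ i.succAbove) hcyc]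
  push_cast
  rw [neg_one_mul, neg_mul, mul_neg, mul_assoc,
    (Int.cast_commute (Perm.sign τ : ℤ) (A i _)).left_comm]

end RowDeterminant

-- `j = i.succAbove j'` ranges over `j ≠ i`; position `0` of `A^{ii}` is `k = min ({1,…,n} \ {i})`.
/-- expansion of the `i`-th row determinant along the `i`-th row
by right cofactors.  The matrix has size `n + 2 ≥ 2`.  `R i j` is the right
`ij`-th cofactor: for `j ≠ i` (i.e. `j = i.succAbove j'`) it is minus the row
determinant, at the position of `j`, of the matrix obtained from `A` by
replacing the `j`-th column with the `i`-th column and deleting the `i`-th row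
and column; `R i i` is the row determinant of `A^{ii}` at the position of
`k = min ({1,…,n} \ {i})`, which is position `0` of the submatrix. -/
theorem stmt4 {n : ℕ} (A : Matrix (Fin (n + 2)) (Fin (n + 2)) ℍ[ℝ])
    (R : Fin (n + 2) → Fin (n + 2) → ℍ[ℝ])
    (hRdiag : ∀ i : Fin (n + 2),
      R i i = rdet (A.submatrix i.succAbove i.succAbove) 0)
    (hRoff : ∀ (i : Fin (n + 2)) (j' : Fin (n + 1)),
      R i (i.succAbove j') =
        - rdet ((A.updateCol (i.succAbove j') fun l => A l i).submatrix
            i.succAbove i.succAbove) j') :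
    ∀ i, rdet A i = ∑ j, A i j * R i j := by
  intro i
  rw [rdet_eq_sum_rdetTerm, ← (insertAt i).sum_comp, Fintype.sum_prod_type, Fintype.sum_option,
    Fin.sum_univ_succAbove _ i, hRdiag, rdet_eq_sum_rdetTerm, Finset.mul_sum]
  congr 1
  · exact Finset.sum_congr rfl fun τ _ => rdetTerm_insertAt_none A i τ
  · refine Finset.sum_congr rfl fun j _ => ?_
    rw [hRoff, rdet_eq_sum_rdetTerm, ← Finset.sum_neg_distrib, Finset.mul_sum]
    exact Finset.sum_congr rfl fun τ _ => rdetTerm_insertAt_some A i j τ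
end
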